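/- arXiv:1604.08473 — 5 statements merged into one kernel-verified Lean document; each statement's English description precedes it below -/
import Mathlib

section
/- Let E be a real Banach space and let K be a convex subset of E that is compact and metrizable in the weak topology. Then the exposed points of K are weakly dense in the affine exposed points of K, which are weakly dense in the extreme points of K; that is, AExp(K) is contained in the weak closure of Exp(K), and Ext(K) is contained in the weak closure of AExp(K). -/
/-!
Weak compactness and metrizability of `K` give countably many functionals `hₙ` separating the
points of `K` with `‖hₙ‖ ≤ 2⁻ⁿ` and `|hₙ| ≤ 2⁻ⁿ` on `K`. Then `T v = (hₙ v)ₙ` is a bounded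
operator `E → ℓ²` which is injective and weak-to-norm continuous on `K`, so `K` becomes a compact
convex set in a Hilbert space, where a point `y` of `K` farthest from some `z` is exposed by the
functional `⟪T y - z, T ·⟫`. For an extreme point `x` and a weak neighbourhood `U` of `x`, Milman's
theorem keeps `T x` outside the closed convex hull `H` of `T (K \ U)`. A ball centred far out on
the ray from the point of `H` nearest to `T x` through `T x` contains `H` but not `T x`, so the
points of `K` farthest from its centre lie in `U`. Hence `Ext K ⊆ closure (Exp K)`, while
`Exp K ⊆ AExp K ⊆ Ext K` directly.
-/

open Set RealInnerProductSpace
open scoped lp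

section ConvexHullCompact

variable {F : Type*} [AddCommGroup F] [Module ℝ F] [TopologicalSpace F] [ContinuousAdd F]
  [ContinuousSMul ℝ F]

theorem IsCompact.convexJoin {s t : Set F} (hs : IsCompact s) (ht : IsCompact t) :
    IsCompact (_root_.convexJoin ℝ s t) := by
  have : _root_.convexJoin ℝ s t =
      (fun p : ℝ × F × F => (1 - p.1) • p.2.1 + p.1 • p.2.2) '' (Icc 0 1 ×ˢ s ×ˢ t) := by
    ext z
    simp only [mem_convexJoin, segment_eq_image, mem_image, mem_prod, Prod.exists]
    constructor
    · rintro ⟨a, ha, b, hb, θ, hθ, rfl⟩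
      exact ⟨θ, a, b, ⟨hθ, ha, hb⟩, rfl⟩
    · rintro ⟨θ, a, b, ⟨hθ, ha, hb⟩, rfl⟩
      exact ⟨a, ha, b, hb, θ, hθ, rfl⟩
  rw [this]
  exact (isCompact_Icc.prod (hs.prod ht)).image (by fun_prop)

theorem IsCompact.convexHull_union {s t : Set F} (hs : IsCompact (convexHull ℝ s))
    (ht : IsCompact (convexHull ℝ t)) : IsCompact (convexHull ℝ (s ∪ t)) := by
  rcases s.eq_empty_or_nonempty with rfl | hs'
  · simpa using ht
  rcases t.eq_empty_or_nonempty with rfl | ht'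
  · simpa using hs
  rw [_root_.convexHull_union hs' ht']
  exact hs.convexJoin ht

theorem Set.Finite.isCompact_convexHull_biUnion {ι : Type*} {t : Set ι} (ht : t.Finite)
    {A : ι → Set F} (hA : ∀ i ∈ t, IsCompact (convexHull ℝ (A i))) :
    IsCompact (convexHull ℝ (⋃ i ∈ t, A i)) := by
  induction t, ht using Set.Finite.induction_on with
  | empty => simp
  | @insert a t _ _ ih =>
    rw [biUnion_insert]
    exact (hA a (mem_insert a t)).convexHull_union
      (ih fun i hi => hA i (mem_insert_of_mem a hi))

end ConvexHullCompact

/-- Milman's converse to the Krein–Milman theorem. -/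
theorem mem_of_mem_extremePoints_of_mem_closure_convexHull {F : Type*} [NormedAddCommGroup F]
    [NormedSpace ℝ F] {C S : Set F} (hC : IsCompact C) (hCc : Convex ℝ C) (hS : IsCompact S)
    (hSC : S ⊆ C) {x : F} (hx : x ∈ extremePoints ℝ C) (hxS : x ∈ closure (convexHull ℝ S)) :
    x ∈ S := by
  rw [← hS.isClosed.closure_eq, Metric.mem_closure_iff]
  intro ε hε
  obtain ⟨t, htS, htfin, hcover⟩ := finite_cover_balls_of_compact hS (half_pos hε)
  set A : F → Set F := fun z => closure (convexHull ℝ (S ∩ Metric.closedBall z (ε / 2)))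
  have hHC : closure (convexHull ℝ S) ⊆ C :=
    closure_minimal (convexHull_min hSC hCc) hC.isClosed
  have hAC : ∀ z, A z ⊆ C := fun z =>
    (closure_mono (convexHull_mono inter_subset_left)).trans hHC
  have hA : ∀ z, IsCompact (convexHull ℝ (A z)) := fun z => by
    rw [(convex_convexHull ℝ _).closure.convexHull_eq]
    exact hC.of_isClosed_subset isClosed_closure (hAC z)
  have hSA : S ⊆ ⋃ z ∈ t, A z := fun y hy => by
    obtain ⟨z, hz, hyz⟩ := mem_iUnion₂.mp (hcover hy)
    exact mem_biUnion hz
      (subset_closure (subset_convexHull ℝ _ ⟨hy, Metric.ball_subset_closedBall hyz⟩))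
  have hxA : x ∈ convexHull ℝ (⋃ z ∈ t, A z) :=
    closure_minimal (convexHull_mono hSA)
      (htfin.isCompact_convexHull_biUnion fun z _ => hA z).isClosed hxS
  have hAC' : convexHull ℝ (⋃ z ∈ t, A z) ⊆ C :=
    convexHull_min (iUnion₂_subset fun z _ => hAC z) hCc
  obtain ⟨z, hzt, hxz⟩ := mem_iUnion₂.mp <| extremePoints_convexHull_subset <|
    inter_extremePoints_subset_extremePoints_of_subset hAC' ⟨hxA, hx⟩
  have hAball : A z ⊆ Metric.closedBall z (ε / 2) :=
    closure_minimal (convexHull_min inter_subset_right (convex_closedBall z _))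
      Metric.isClosed_closedBall
  exact ⟨z, htS hzt, (Metric.mem_closedBall.mp (hAball hxz)).trans_lt (half_lt_self hε)⟩

section Hilbert

variable {F : Type*} [NormedAddCommGroup F] [InnerProductSpace ℝ F]

theorem inner_lt_inner_of_norm_sub_le {a b z : F} (hba : b ≠ a) (h : ‖b - z‖ ≤ ‖a - z‖) :
    ⟪a - z, b⟫ < ⟪a - z, a⟫ := by
  have hexp : ‖b - z‖ ^ 2 = ‖b - a‖ ^ 2 + 2 * ⟪b - a, a - z⟫ + ‖a - z‖ ^ 2 := by
    rw [← norm_add_sq_real, sub_add_sub_cancel]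
  have hpos : 0 < ‖b - a‖ := norm_pos_iff.mpr (sub_ne_zero.mpr hba)
  have hsq : ‖b - z‖ ^ 2 ≤ ‖a - z‖ ^ 2 := pow_le_pow_left₀ (norm_nonneg _) h 2
  rw [real_inner_comm, inner_sub_right] at hexp
  nlinarith

theorem IsCompact.exists_forall_norm_sub_lt {C : Set F} (hC : IsCompact C) (hCc : Convex ℝ C)
    {a : F} (ha : a ∉ C) : ∃ z, ∀ b ∈ C, ‖b - z‖ < ‖a - z‖ := by
  rcases C.eq_empty_or_nonempty with rfl | hne
  · exact ⟨a, by simp⟩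
  obtain ⟨p, hpC, hp⟩ := exists_norm_eq_iInf_of_complete_convex hne hC.isComplete hCc a
  have hvar := (norm_eq_iInf_iff_real_inner_le_zero hCc hpC).mp hp
  obtain ⟨D, hD⟩ := hC.exists_bound_of_continuousOn (f := fun b => b - a) (by fun_prop)
  set u := a - p with hu
  have hd : 0 < ‖u‖ ^ 2 := by
    have : u ≠ 0 := sub_ne_zero.mpr fun h => ha (h ▸ hpC)
    positivity
  -- the centre lies far out on the ray from `a` away from its nearest point `p` in `C`
  set R := D ^ 2 / ‖u‖ ^ 2 + 1 with hR
  have hRd : R * ‖u‖ ^ 2 = D ^ 2 + ‖u‖ ^ 2 := by rw [hR, add_mul, div_mul_cancel₀ _ hd.ne', one_mul]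
  refine ⟨a - R • u, fun b hb => ?_⟩
  have hinner : ⟪b - a, u⟫ ≤ -‖u‖ ^ 2 := by
    have := hvar b hb
    rw [show b - a = (b - p) - u by rw [hu]; abel, inner_sub_left, real_inner_self_eq_norm_sq,
      real_inner_comm]
    linarith
  have hbD : ‖b - a‖ ^ 2 ≤ D ^ 2 := pow_le_pow_left₀ (norm_nonneg _) (hD b hb) 2
  have hb : ‖b - (a - R • u)‖ ^ 2 = ‖b - a‖ ^ 2 + 2 * R * ⟪b - a, u⟫ + R ^ 2 * ‖u‖ ^ 2 := by
    rw [show b - (a - R • u) = (b - a) + R • u by abel, norm_add_sq_real, inner_smul_right,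
      norm_smul, Real.norm_eq_abs, mul_pow, sq_abs]
    ring
  have ha' : ‖a - (a - R • u)‖ ^ 2 = R ^ 2 * ‖u‖ ^ 2 := by
    rw [sub_sub_cancel, norm_smul, Real.norm_eq_abs, mul_pow, sq_abs]
  refine lt_of_pow_lt_pow_left₀ 2 (norm_nonneg _) ?_
  rw [hb, ha']
  nlinarith

end Hilbert

theorem mem_extremePoints_image_of_injOn {X F : Type*} [AddCommGroup X] [Module ℝ X]
    [AddCommGroup F] [Module ℝ F] (f : X →ₗ[ℝ] F) {K : Set X} (hK : Convex ℝ K)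
    (hf : InjOn f K) {x : X} (hx : x ∈ extremePoints ℝ K) : f x ∈ extremePoints ℝ (f '' K) := by
  refine ⟨mem_image_of_mem f hx.1, ?_⟩
  rintro _ ⟨a, ha, rfl⟩ _ ⟨b, hb, rfl⟩ hseg
  obtain ⟨c, hc, hcx⟩ : f x ∈ f '' openSegment ℝ a b := by
    rwa [← f.coe_toAffineMap, image_openSegment]
  obtain rfl : c = x := hf (hK.openSegment_subset ha hb hc) hx.1 hcx
  exact congrArg f (hx.2 ha hb hc)

theorem extremePoints_subset_closure_exposed {X F : Type*} [TopologicalSpace X] [AddCommGroup X]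
    [Module ℝ X] [NormedAddCommGroup F] [InnerProductSpace ℝ F] {K : Set X} (hK : IsCompact K)
    (hKc : Convex ℝ K) (f : X →ₗ[ℝ] F) (hf : ContinuousOn f K) (hinj : InjOn f K) :
    extremePoints ℝ K ⊆ closure {p ∈ K | ∃ w : F, ∀ q ∈ K, q ≠ p → ⟪w, f q⟫ < ⟪w, f p⟫} := by
  intro x hx
  rw [mem_closure_iff]
  intro U hU hxU
  set S := f '' (K \ U)
  have hfK : IsCompact (f '' K) := hK.image_of_continuousOn hf
  have hSK : S ⊆ f '' K := image_mono sdiff_subset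
  have hH : IsCompact (closure (convexHull ℝ S)) :=
    hfK.of_isClosed_subset isClosed_closure
      (closure_minimal (convexHull_min hSK (hKc.linear_image f)) hfK.isClosed)
  have hxS : f x ∉ closure (convexHull ℝ S) := fun h => by
    obtain ⟨y, hy, hyx⟩ := mem_of_mem_extremePoints_of_mem_closure_convexHull hfK
      (hKc.linear_image f) ((hK.diff hU).image_of_continuousOn (hf.mono sdiff_subset)) hSK
      (mem_extremePoints_image_of_injOn f hKc hinj hx) h
    exact hy.2 (hinj hy.1 hx.1 hyx ▸ hxU)
  obtain ⟨z, hz⟩ := hH.exists_forall_norm_sub_lt (convex_convexHull ℝ S).closure hxS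
  obtain ⟨y, hyK, hy⟩ := hK.exists_isMaxOn ⟨x, hx.1⟩ (f := fun y => ‖f y - z‖)
    (hf.sub continuousOn_const).norm
  have hyU : y ∈ U := by
    by_contra hyU
    exact (hy hx.1).not_gt (hz (f y) (subset_closure (subset_convexHull ℝ S ⟨y, ⟨hyK, hyU⟩, rfl⟩)))
  exact ⟨y, hyU, hyK, f y - z, fun q hq hqy =>
    inner_lt_inner_of_norm_sub_le (fun h => hqy (hinj hq hyK h)) (hy hq)⟩

theorem exists_seq_separating_subfamily {X Y ι : Type*} [TopologicalSpace X]
    [SecondCountableTopology X] [TopologicalSpace Y] [T2Space Y] [Nonempty ι] (f : ι → X → Y)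
    (hf : ∀ i, Continuous (f i)) (hsep : ∀ x y, x ≠ y → ∃ i, f i x ≠ f i y) :
    ∃ g : ℕ → ι, ∀ x y, (∀ n, f (g n) x = f (g n) y) → x = y := by
  obtain ⟨T, hT, hTU⟩ := TopologicalSpace.isOpen_iUnion_countable
    (fun i => {p : X × X | f i p.1 ≠ f i p.2})
    (fun i => isOpen_ne_fun ((hf i).comp continuous_fst) ((hf i).comp continuous_snd))
  obtain ⟨i₀⟩ := ‹Nonempty ι›
  obtain ⟨g, hg⟩ := (hT.insert i₀).exists_eq_range (insert_nonempty _ _)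
  refine ⟨g, fun x y hxy => by_contra fun hne => ?_⟩
  have hxy' : (x, y) ∈ ⋃ i ∈ T, {p : X × X | f i p.1 ≠ f i p.2} :=
    hTU ▸ mem_iUnion.mpr (hsep x y hne)
  obtain ⟨i, hi, hne'⟩ := mem_iUnion₂.mp hxy'
  obtain ⟨n, rfl⟩ : i ∈ range g := hg ▸ mem_insert_of_mem _ hi
  exact hne' (hxy n)

theorem lp.continuous_of_abs_le {Y : Type*} [TopologicalSpace Y] {g : Y → ℓ²(ℕ, ℝ)}
    {c : ℕ → ℝ} (hc : Summable fun n => c n ^ 2) (hg : ∀ n, Continuous fun y => g y n)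
    (hgc : ∀ y n, |g y n| ≤ c n) : Continuous g := by
  refine continuous_iff_continuousAt.mpr fun y₀ => ?_
  rw [ContinuousAt, tendsto_iff_norm_sub_tendsto_zero]
  have hnorm : ∀ y, ‖g y - g y₀‖ = √(∑' n, (g y n - g y₀ n) ^ 2) := fun y => by
    rw [norm_eq_sqrt_real_inner, lp.inner_eq_tsum]
    simp [sq]
  have hφ : Continuous fun y => ∑' n, (g y n - g y₀ n) ^ 2 := by
    refine continuous_tsum (fun n => ((hg n).sub continuous_const).pow 2) (hc.mul_left 4)
      fun n y => ?_
    have h2 : |g y n - g y₀ n| ≤ 2 * c n :=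
      (abs_sub _ _).trans (by linarith [hgc y n, hgc y₀ n])
    rw [Real.norm_eq_abs, abs_pow, show 4 * c n ^ 2 = (2 * c n) ^ 2 by ring]
    exact pow_le_pow_left₀ (abs_nonneg _) h2 2
  simpa [hnorm] using hφ.sqrt.tendsto y₀

section SeqToL2

variable {E : Type*} [NormedAddCommGroup E] [NormedSpace ℝ E] {h : ℕ → E →L[ℝ] ℝ}

theorem sq_norm_apply_le {G : Type*} [SeminormedAddCommGroup G] [NormedSpace ℝ G]
    (h : E →L[ℝ] G) (v : E) : ‖h v‖ ^ 2 ≤ ‖h‖ ^ 2 * ‖v‖ ^ 2 := by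
  rw [← mul_pow]
  exact pow_le_pow_left₀ (norm_nonneg _) (h.le_opNorm v) 2

theorem summable_sq_norm_apply (hh : Summable fun n => ‖h n‖ ^ 2) (v : E) :
    Summable fun n => ‖h n v‖ ^ 2 :=
  (hh.mul_right (‖v‖ ^ 2)).of_nonneg_of_le (fun n => by positivity)
    fun n => sq_norm_apply_le (h n) v

noncomputable def seqToL2 (hh : Summable fun n => ‖h n‖ ^ 2) : E →L[ℝ] ℓ²(ℕ, ℝ) :=
  LinearMap.mkContinuous
    { toFun := fun v => ⟨fun n => h n v, memℓp_gen (by simpa using summable_sq_norm_apply hh v)⟩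
      map_add' := fun v w => lp.ext <| funext fun n => map_add (h n) v w
      map_smul' := fun c v => lp.ext <| funext fun n => map_smul (h n) c v }
    √(∑' n, ‖h n‖ ^ 2) fun v => by
      refine lp.norm_le_of_tsum_le (by norm_num) (by positivity) ?_
      simp only [ENNReal.toReal_ofNat, Real.rpow_two, LinearMap.coe_mk, AddHom.coe_mk, mul_pow,
        Real.sq_sqrt (tsum_nonneg fun n => sq_nonneg ‖h n‖), ← tsum_mul_right]
      exact (summable_sq_norm_apply hh v).tsum_le_tsum (fun n => sq_norm_apply_le (h n) v)
        (hh.mul_right _)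

end SeqToL2

section WeakSpace

variable {E : Type*} [NormedAddCommGroup E] [NormedSpace ℝ E]

theorem WeakSpace.continuous_apply (g : E →L[ℝ] ℝ) : Continuous fun x : WeakSpace ℝ E => g x :=
  WeakBilin.eval_continuous (topDualPairing ℝ E).flip g

theorem WeakSpace.exists_seq_dual_separating {K : Set (WeakSpace ℝ E)} (hK : IsCompact K)
    [TopologicalSpace.MetrizableSpace K] :
    ∃ h : ℕ → E →L[ℝ] ℝ, (∀ n, ‖h n‖ ≤ (2⁻¹ : ℝ) ^ n) ∧ (∀ n, ∀ y ∈ K, |h n y| ≤ (2⁻¹ : ℝ) ^ n) ∧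
      ∀ v ∈ K, ∀ w ∈ K, (∀ n, h n v = h n w) → v = w := by
  have : CompactSpace K := isCompact_iff_compactSpace.mp hK
  obtain ⟨g, hg⟩ := exists_seq_separating_subfamily
    (fun (g : E →L[ℝ] ℝ) (y : K) => g (y : WeakSpace ℝ E))
    (fun g => (WeakSpace.continuous_apply g).comp continuous_subtype_val)
    (fun y y' hne => SeparatingDual.exists_separating_of_ne (R := ℝ) (V := E)
      fun h => hne (Subtype.ext h))
  have hbound : ∀ n, ∃ M > 0, ‖g n‖ ≤ M ∧ ∀ y ∈ K, |g n y| ≤ M := fun n => by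
    obtain ⟨C, hC⟩ :=
      hK.exists_bound_of_continuousOn (WeakSpace.continuous_apply (g n)).continuousOn
    refine ⟨‖g n‖ + |C| + 1, by positivity, by linarith [abs_nonneg C], fun y hy => ?_⟩
    linarith [hC y hy, le_abs_self C, norm_nonneg (g n), Real.norm_eq_abs (g n y)]
  choose M hM hgM hgKM using hbound
  have hc : ∀ n, 0 < (2⁻¹ : ℝ) ^ n / M n := fun n => div_pos (by positivity) (hM n)
  have hscale : ∀ n {t : ℝ}, t ≤ M n → (2⁻¹ : ℝ) ^ n / M n * t ≤ (2⁻¹ : ℝ) ^ n := fun n t ht => by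
    rw [div_mul_eq_mul_div, div_le_iff₀ (hM n)]
    exact mul_le_mul_of_nonneg_left ht (by positivity)
  refine ⟨fun n => ((2⁻¹ : ℝ) ^ n / M n) • g n, fun n => ?_, fun n y hy => ?_,
    fun v hv w hw h => ?_⟩
  · rw [norm_smul, Real.norm_of_nonneg (hc n).le]
    exact hscale n (hgM n)
  · show |(2⁻¹ : ℝ) ^ n / M n * g n y| ≤ _
    rw [abs_mul, abs_of_nonneg (hc n).le]
    exact hscale n (hgKM n y hy)
  · refine congrArg Subtype.val (hg ⟨v, hv⟩ ⟨w, hw⟩ fun n => ?_)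
    have hn : (2⁻¹ : ℝ) ^ n / M n * g n v = (2⁻¹ : ℝ) ^ n / M n * g n w := h n
    exact mul_left_cancel₀ (hc n).ne' hn

theorem WeakSpace.exists_lp_two_continuousOn_injOn {K : Set (WeakSpace ℝ E)} (hK : IsCompact K)
    [TopologicalSpace.MetrizableSpace K] :
    ∃ T : E →L[ℝ] ℓ²(ℕ, ℝ), ContinuousOn (fun y : WeakSpace ℝ E => T y) K ∧
      InjOn (fun y : WeakSpace ℝ E => T y) K := by
  obtain ⟨h, hnorm, hK', hsep⟩ := WeakSpace.exists_seq_dual_separating hK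
  have hgeom : Summable fun n : ℕ => ((2⁻¹ : ℝ) ^ n) ^ 2 := by
    refine (summable_geometric_of_lt_one (r := (2⁻¹ : ℝ) ^ 2) (by positivity) (by norm_num)).congr
      fun n => by rw [← pow_mul, ← pow_mul, mul_comm]
  have hh : Summable fun n => ‖h n‖ ^ 2 :=
    hgeom.of_nonneg_of_le (fun n => by positivity)
      fun n => pow_le_pow_left₀ (norm_nonneg _) (hnorm n) 2
  refine ⟨seqToL2 hh, ?_, fun v hv w hw hvw => hsep v hv w hw fun n => ?_⟩
  · rw [continuousOn_iff_continuous_domRestrict]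
    exact lp.continuous_of_abs_le hgeom
      (fun n => (WeakSpace.continuous_apply (h n)).comp continuous_subtype_val)
      fun y n => hK' n y y.2
  · exact congrArg (· n) hvw

theorem WeakSpace.extremePoints_subset_closure_exposed {K : Set (WeakSpace ℝ E)}
    (hconv : Convex ℝ K) (hcomp : IsCompact K) [TopologicalSpace.MetrizableSpace K] :
    extremePoints ℝ K ⊆ closure {p ∈ K | ∃ g : E →L[ℝ] ℝ, ∀ q ∈ K, q ≠ p → g q < g p} := by
  obtain ⟨T, hTc, hTi⟩ := WeakSpace.exists_lp_two_continuousOn_injOn hcomp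
  refine (_root_.extremePoints_subset_closure_exposed hcomp hconv
    (T.toLinearMap.comp (toWeakSpace ℝ E).symm.toLinearMap) hTc hTi).trans (closure_mono ?_)
  rintro p ⟨hp, w, hw⟩
  exact ⟨hp, (innerSL ℝ w).comp T, hw⟩

end WeakSpace

theorem mem_extremePoints_of_affine_of_forall_lt {X : Type*} [AddCommGroup X] [Module ℝ X]
    {K : Set X} {p : X} (hp : p ∈ K) (τ : K → ℝ)
    (hτ : ∀ (a b : X) (ha : a ∈ K) (hb : b ∈ K) (l : ℝ), 0 ≤ l → l ≤ 1 →
      ∀ hm : l • a + (1 - l) • b ∈ K,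
        τ ⟨l • a + (1 - l) • b, hm⟩ = l * τ ⟨a, ha⟩ + (1 - l) * τ ⟨b, hb⟩)
    (hmax : ∀ q : X, ∀ hq : q ∈ K, q ≠ p → τ ⟨q, hq⟩ < τ ⟨p, hp⟩) :
    p ∈ extremePoints ℝ K := by
  refine ⟨hp, fun a ha b hb ⟨l, m, hl, hm, hlm, hab⟩ => by_contra fun hne => ?_⟩
  obtain rfl : m = 1 - l := by linarith
  subst hab
  have hb_le : τ ⟨b, hb⟩ ≤ τ ⟨l • a + (1 - l) • b, hp⟩ := by
    rcases eq_or_ne b (l • a + (1 - l) • b) with h | h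
    · exact (congrArg τ (Subtype.ext h)).le
    · exact (hmax b hb h).le
  have := hτ a b ha hb l hl.le (by linarith) hp
  nlinarith [mul_lt_mul_of_pos_left (hmax a ha hne) hl, mul_le_mul_of_nonneg_left hb_le hm.le]

theorem stmt_13_general {E : Type*} [NormedAddCommGroup E] [NormedSpace ℝ E]
    (K : Set (WeakSpace ℝ E)) (hconv : Convex ℝ K) (hcomp : IsCompact K)
    (hmetr : TopologicalSpace.MetrizableSpace K)
    (Exp AExp : Set (WeakSpace ℝ E))
    (hExp : Exp = {p ∈ K | ∃ g : E →L[ℝ] ℝ, ∀ q ∈ K, q ≠ p → g q < g p})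
    (hAExp : AExp = {p : WeakSpace ℝ E | ∃ hp : p ∈ K, ∃ τ : K → ℝ, Continuous τ ∧
      (∀ (a b : WeakSpace ℝ E) (ha : a ∈ K) (hb : b ∈ K) (l : ℝ), 0 ≤ l → l ≤ 1 →
        ∀ hm : l • a + (1 - l) • b ∈ K,
          τ ⟨l • a + (1 - l) • b, hm⟩ = l * τ ⟨a, ha⟩ + (1 - l) * τ ⟨b, hb⟩) ∧
      (∀ q : WeakSpace ℝ E, ∀ hq : q ∈ K, q ≠ p → τ ⟨q, hq⟩ < τ ⟨p, hp⟩)}) :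
    AExp ⊆ closure Exp ∧ Set.extremePoints ℝ K ⊆ closure AExp := by
  have := hmetr
  have hExt : extremePoints ℝ K ⊆ closure Exp := by
    rw [hExp]
    exact WeakSpace.extremePoints_subset_closure_exposed hconv hcomp
  have hAExp_Ext : AExp ⊆ extremePoints ℝ K := by
    rw [hAExp]
    rintro p ⟨hp, τ, -, hτ, hmax⟩
    exact mem_extremePoints_of_affine_of_forall_lt hp τ hτ hmax
  have hExp_AExp : Exp ⊆ AExp := by
    rw [hExp, hAExp]
    rintro p ⟨hp, g, hg⟩
    refine ⟨hp, fun q => g (q : WeakSpace ℝ E),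
      (WeakSpace.continuous_apply g).comp continuous_subtype_val, fun a b _ _ l _ _ _ => ?_, hg⟩
    exact (map_add g (l • a) ((1 - l) • b)).trans
      (congrArg₂ (· + ·) (map_smul g l a) (map_smul g (1 - l) b))
  exact ⟨hAExp_Ext.trans hExt, hExt.trans (closure_mono hExp_AExp)⟩

/-- Let `E` be a real Banach space and `K` a convex, weakly compact, weakly metrizable subset
of `E`. Then the exposed points of `K` are weakly dense in its affine exposed points, which
are weakly dense in its extreme points. -/
theorem stmt_13 {E : Type*} [NormedAddCommGroup E] [NormedSpace ℝ E] [CompleteSpace E]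
    (K : Set (WeakSpace ℝ E)) (hconv : Convex ℝ K) (hcomp : IsCompact K)
    (hmetr : TopologicalSpace.MetrizableSpace K)
    (Exp AExp : Set (WeakSpace ℝ E))
    (hExp : Exp = {p ∈ K | ∃ g : E →L[ℝ] ℝ, ∀ q ∈ K, q ≠ p → g q < g p})
    (hAExp : AExp = {p : WeakSpace ℝ E | ∃ hp : p ∈ K, ∃ τ : K → ℝ, Continuous τ ∧
      (∀ (a b : WeakSpace ℝ E) (ha : a ∈ K) (hb : b ∈ K) (l : ℝ), 0 ≤ l → l ≤ 1 →
        ∀ hm : l • a + (1 - l) • b ∈ K,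
          τ ⟨l • a + (1 - l) • b, hm⟩ = l * τ ⟨a, ha⟩ + (1 - l) * τ ⟨b, hb⟩) ∧
      (∀ q : WeakSpace ℝ E, ∀ hq : q ∈ K, q ≠ p → τ ⟨q, hq⟩ < τ ⟨p, hp⟩)}) :
    AExp ⊆ closure Exp ∧ Set.extremePoints ℝ K ⊆ closure AExp :=
  stmt_13_general K hconv hcomp hmetr Exp AExp hExp hAExp
end

section
/- Let Z be a real Banach space and let h, k : Z → ℝ be convex continuous functions. Suppose the function l : Z → ℝ defined by l(z) = max(h(z), k(z)) is Fréchet differentiable at a point z₀ ∈ Z with derivative D = l'(z₀). Then either h is Fréchet differentiable at z₀ with h'(z₀) = D, or k is Fréchet differentiable at z₀ with k'(z₀) = D. -/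
open Asymptotics Filter

lemma aux_touch {Z : Type*} [NormedAddCommGroup Z] [NormedSpace ℝ Z]
    (f l : Z → ℝ) (fconv : ConvexOn ℝ Set.univ f) (hle : ∀ z, f z ≤ l z)
    (z₀ : Z) (heq : f z₀ = l z₀) (D : Z →L[ℝ] ℝ) (hl : HasFDerivAt l D z₀) :
    HasFDerivAt f D z₀ := by
  rw [hasFDerivAt_iff_isLittleO_nhds_zero] at hl ⊢
  have hneg : (fun v : Z => l (z₀ + -v) - l z₀ - D (-v)) =o[nhds 0] (fun v : Z => v) := by
    have htend : Tendsto (fun v : Z => -v) (nhds 0) (nhds (0:Z)) := by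
      simpa using (continuous_neg.tendsto (0:Z))
    have h1 := hl.comp_tendsto htend
    exact h1.trans_isBigO (isBigO_of_le _ fun x => by simp)
  have key : ∀ v : Z, |f (z₀ + v) - f z₀ - D v| ≤
      |l (z₀ + v) - l z₀ - D v| + |l (z₀ + -v) - l z₀ - D (-v)| := by
    intro v
    have hup : f (z₀ + v) - f z₀ - D v ≤ l (z₀ + v) - l z₀ - D v := by
      have := hle (z₀ + v); linarith [heq]
    have hconv2 : f z₀ ≤ (1/2 : ℝ) * f (z₀ + v) + (1/2 : ℝ) * f (z₀ - v) := by
      have h2 := fconv.2 (Set.mem_univ (z₀ + v)) (Set.mem_univ (z₀ - v))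
        (by norm_num : (0:ℝ) ≤ 1/2) (by norm_num : (0:ℝ) ≤ 1/2) (by norm_num)
      have : (1/2 : ℝ) • (z₀ + v) + (1/2 : ℝ) • (z₀ - v) = z₀ := by
        module
      rwa [this] at h2
    have hlow : -(l (z₀ + -v) - l z₀ - D (-v)) ≤ f (z₀ + v) - f z₀ - D v := by
      have h3 := hle (z₀ - v)
      have : z₀ + -v = z₀ - v := by abel
      rw [this]
      have hD : D (-v) = -(D v) := by simp
      rw [hD]
      linarith [heq]
    rw [abs_le]
    constructor
    · calc -(|l (z₀ + v) - l z₀ - D v| + |l (z₀ + -v) - l z₀ - D (-v)|)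
          ≤ -(l (z₀ + -v) - l z₀ - D (-v)) := by
            have := abs_nonneg (l (z₀ + v) - l z₀ - D v)
            have := le_abs_self (l (z₀ + -v) - l z₀ - D (-v))
            linarith
        _ ≤ _ := hlow
    · calc f (z₀ + v) - f z₀ - D v ≤ l (z₀ + v) - l z₀ - D v := hup
        _ ≤ |l (z₀ + v) - l z₀ - D v| := le_abs_self _
        _ ≤ _ := le_add_of_nonneg_right (abs_nonneg _)
  have hsum : (fun v : Z => |l (z₀ + v) - l z₀ - D v| + |l (z₀ + -v) - l z₀ - D (-v)|)
      =o[nhds 0] (fun v : Z => v) := by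
    refine IsLittleO.add ?_ ?_
    · exact hl.abs_left
    · exact hneg.abs_left
  refine (isBigO_of_le _ ?_).trans_isLittleO hsum
  intro x
  simpa [Real.norm_eq_abs, abs_abs] using
    (key x).trans (le_abs_self _)

/-- Let `Z` be a real Banach space and `h, k : Z → ℝ` convex continuous functions. If
`l = max(h, k)` is Fréchet differentiable at `z₀` with derivative `D`, then either `h` or `k`
is Fréchet differentiable at `z₀` with derivative `D`. -/
theorem stmt_14 {Z : Type*} [NormedAddCommGroup Z] [NormedSpace ℝ Z] [CompleteSpace Z]
    (h k : Z → ℝ) (hconv : ConvexOn ℝ Set.univ h) (kconv : ConvexOn ℝ Set.univ k)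
    (hcont : Continuous h) (kcont : Continuous k)
    (z₀ : Z) (D : Z →L[ℝ] ℝ)
    (hl : HasFDerivAt (fun z => max (h z) (k z)) D z₀) :
    HasFDerivAt h D z₀ ∨ HasFDerivAt k D z₀ := by
  rcases le_total (k z₀) (h z₀) with hc | hc
  · left
    exact aux_touch h (fun z => max (h z) (k z)) hconv (fun z => le_max_left _ _)
      z₀ (by simp [max_eq_left hc]) D hl
  · right
    exact aux_touch k (fun z => max (h z) (k z)) kconv (fun z => le_max_right _ _)
      z₀ (by simp [max_eq_right hc]) D hl
end

section
/- Let K be a compact metric space and let Φ be a closed linear subspace of (C(K,ℝ), ‖·‖_∞) that separates the points of K and contains the constant functions. Then: (a) the set ΦExp(K) of Φ-exposed points of K is a norming subset for Φ, i.e. ‖φ‖_∞ = sup_{k ∈ ΦExp(K)} |φ(k)| for every φ ∈ Φ; and (b) ΦExp(K) ⊆ C for every closed subset C of K which is a boundary for Φ, i.e. such that ‖φ‖_∞ = max_{k∈C}|φ(k)| for every φ ∈ Φ. Consequently the closure of ΦExp(K) is the smallest closed boundary (the Shilov boundary) of Φ. -/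
/-!
The maximum functional `M φ = max φ` is 1-Lipschitz on the separable Banach space `Φ`, so by a
Baire category argument (Mazur's theorem, in a form that needs only the Lipschitz property) the
`φ ∈ Φ` at which the symmetric second difference quotients of `M` along every direction have
`liminf ≤ 0` are dense in `Φ`. Such a `φ` attains its maximum at a single point: if it attained it
at `x ≠ y`, a `ψ ∈ Φ` separating them would give `M (φ + sψ) + M (φ - sψ) - 2 M φ ≥ s |ψ x - ψ y|`.
So every `φ ∈ Φ` is uniformly close to a function exposing a point, and applying this to `±φ`
shows that the exposed points are norming. Conversely, adding a large constant to a function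
exposing `k` gives a positive function whose norm is attained only at `k`, so every closed
boundary contains `k`.
-/

open TopologicalSpace Metric

section SecondDifference

variable {E F : Type*} [AddCommGroup E] [Module ℝ E] [AddCommGroup F] [Module ℝ F]

def secondDiff (f : E → ℝ) (x v : E) (s : ℝ) : ℝ :=
  f (x + s • v) + f (x - s • v) - 2 * f x

/-- For convex `f` this is Gâteaux differentiability of `f` at `x` along `v`. -/
def SmoothAlong (f : E → ℝ) (x v : E) : Prop :=
  ∀ c > 0, ∃ s > 0, secondDiff f x v s < c * s

theorem SmoothAlong.of_comp {f : F → ℝ} (T : E →ₗ[ℝ] F) {x v : E}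
    (h : SmoothAlong (f ∘ T) x v) : SmoothAlong f (T x) (T v) := by
  simpa [SmoothAlong, secondDiff] using h

end SecondDifference

theorem natCast_mul_le_of_le_second_diff {a : ℕ → ℝ} {B D : ℝ} {N : ℕ}
    (hB : ∀ i, |a (i + 1) - a i| ≤ B) (hD : ∀ i < N, D ≤ a (i + 2) + a i - 2 * a (i + 1)) :
    N * D ≤ 2 * B := by
  have hgrowth : ∀ i ≤ N, a 1 - a 0 + i * D ≤ a (i + 1) - a i := by
    intro i hi
    induction i with
    | zero => simp
    | succ i ih =>
      have := hD i (by omega)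
      have := ih (by omega)
      push_cast
      linarith
  have h0 := abs_le.1 (hB 0)
  have hN := abs_le.1 (hB N)
  have := hgrowth N le_rfl
  linarith

section Lipschitz

variable {E : Type*} [NormedAddCommGroup E] [NormedSpace ℝ E] {f : E → ℝ} {L : NNReal}

theorem isOpen_setOf_exists_secondDiff_lt (hf : Continuous f) (v : E) (c : ℝ) :
    IsOpen {x | ∃ s > 0, secondDiff f x v s < c * s} := by
  have : {x | ∃ s > 0, secondDiff f x v s < c * s} =
      ⋃ s > 0, {x | secondDiff f x v s < c * s} := by
    ext; simp
  rw [this]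
  refine isOpen_biUnion fun s _ => isOpen_lt ?_ continuous_const
  unfold secondDiff
  fun_prop

theorem secondDiff_le_add (hf : LipschitzWith L f) (x v w : E) {s : ℝ} (hs : 0 ≤ s) :
    secondDiff f x v s ≤ secondDiff f x w s + 2 * L * (s * ‖v - w‖) := by
  have h₁ := hf.dist_le_mul (x + s • v) (x + s • w)
  have h₂ := hf.dist_le_mul (x - s • v) (x - s • w)
  have e₁ : dist (x + s • v) (x + s • w) = s * ‖v - w‖ := by
    rw [dist_eq_norm, show x + s • v - (x + s • w) = s • (v - w) by module, norm_smul,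
      Real.norm_of_nonneg hs]
  have e₂ : dist (x - s • v) (x - s • w) = s * ‖v - w‖ := by
    rw [dist_eq_norm, show x - s • v - (x - s • w) = -(s • (v - w)) by module, norm_neg,
      norm_smul, Real.norm_of_nonneg hs]
  rw [e₁, Real.dist_eq] at h₁
  rw [e₂, Real.dist_eq] at h₂
  unfold secondDiff
  linarith [(abs_le.1 h₁).2, (abs_le.1 h₂).2]

theorem isClosed_setOf_smoothAlong (hf : LipschitzWith L f) (x : E) :
    IsClosed {v | SmoothAlong f x v} := by
  refine isClosed_of_closure_subset fun v hv c hc => ?_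
  obtain ⟨w, hw, hvw⟩ := Metric.mem_closure_iff.1 hv (c / (4 * (L + 1))) (by positivity)
  obtain ⟨s, hs, hlt⟩ := hw (c / 2) (by positivity)
  refine ⟨s, hs, (secondDiff_le_add hf x v w hs.le).trans_lt ?_⟩
  rw [dist_eq_norm, lt_div_iff₀ (by positivity)] at hvw
  have hL : (0 : ℝ) ≤ L := L.2
  nlinarith [norm_nonneg (v - w)]

theorem dense_setOf_exists_secondDiff_lt (hf : LipschitzWith L f) (v : E) {c : ℝ} (hc : 0 < c) :
    Dense {x | ∃ s > 0, secondDiff f x v s < c * s} := by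
  -- Off this set, the increments of `f` along `x₀ + (i * δ) • v` grow by `c * δ` at each step,
  -- which the Lipschitz bound forbids for more than `2 * L * ‖v‖ / c` steps.
  refine Metric.dense_iff.2 fun x₀ r hr => ?_
  by_contra hempty
  have hfar : ∀ y ∈ ball x₀ r, ∀ s > 0, c * s ≤ secondDiff f y v s :=
    fun y hy s hs => not_lt.1 fun h => hempty ⟨y, hy, s, hs, h⟩
  obtain ⟨N, hN⟩ := exists_nat_gt (2 * L * ‖v‖ / c)
  set δ := r / (N * ‖v‖ + 1)
  have hδ : 0 < δ := by positivity
  set a : ℕ → ℝ := fun i => f (x₀ + ((i : ℝ) * δ) • v)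
  have hball : ∀ i ≤ N, x₀ + ((i : ℝ) * δ) • v ∈ ball x₀ r := by
    intro i hi
    rw [mem_ball, dist_eq_norm, add_sub_cancel_left, norm_smul,
      Real.norm_of_nonneg (by positivity)]
    calc (i : ℝ) * δ * ‖v‖ ≤ N * ‖v‖ * δ := by
          have : (i : ℝ) ≤ N := by exact_mod_cast hi
          nlinarith [mul_nonneg hδ.le (norm_nonneg v)]
      _ < (N * ‖v‖ + 1) * δ := by linarith
      _ = r := by simp only [δ]; field_simp
  have hbound := natCast_mul_le_of_le_second_diff (a := a) (B := L * (δ * ‖v‖)) (D := c * δ)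
    (N := N) (fun i => ?_) (fun i hi => ?_)
  · rw [div_lt_iff₀ hc] at hN
    nlinarith
  · have := hf.dist_le_mul (x₀ + (((i + 1 : ℕ) : ℝ) * δ) • v) (x₀ + ((i : ℝ) * δ) • v)
    rwa [Real.dist_eq, dist_eq_norm,
      show x₀ + (((i + 1 : ℕ) : ℝ) * δ) • v - (x₀ + ((i : ℝ) * δ) • v) = δ • v by
        push_cast; module,
      norm_smul, Real.norm_of_nonneg hδ.le] at this
  · have := hfar _ (hball (i + 1) hi) δ hδ
    unfold secondDiff at this
    simp only [a]
    rw [show x₀ + (((i + 1 : ℕ) : ℝ) * δ) • v + δ • v = x₀ + (((i + 2 : ℕ) : ℝ) * δ) • v by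
        push_cast; module,
      show x₀ + (((i + 1 : ℕ) : ℝ) * δ) • v - δ • v = x₀ + ((i : ℝ) * δ) • v by
        push_cast; module] at this
    linarith

theorem LipschitzWith.dense_setOf_forall_smoothAlong [CompleteSpace E] [SeparableSpace E]
    (hf : LipschitzWith L f) : Dense {x | ∀ v, SmoothAlong f x v} := by
  obtain ⟨D, hDc, hDd⟩ := exists_countable_dense E
  have : Countable D := hDc.to_subtype
  have hG : Dense (⋂ p : D × ℕ, {x | ∃ s > 0, secondDiff f x p.1 s < 1 / (p.2 + 1) * s}) :=
    dense_iInter_of_isOpen (fun p => isOpen_setOf_exists_secondDiff_lt hf.continuous _ _)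
      (fun p => dense_setOf_exists_secondDiff_lt hf _ Nat.one_div_pos_of_nat)
  refine hG.mono fun x hx v => ?_
  have hD : D ⊆ {v | SmoothAlong f x v} := fun w hw c hc => by
    obtain ⟨n, hn⟩ := exists_nat_one_div_lt hc
    obtain ⟨s, hs, hlt⟩ := Set.mem_iInter.1 hx (⟨w, hw⟩, n)
    exact ⟨s, hs, hlt.trans (by gcongr)⟩
  exact (isClosed_setOf_smoothAlong hf x).closure_subset_iff.2 hD (hDd.closure_eq ▸ Set.mem_univ v)

end Lipschitz

section SupValue

variable {K : Type*} [TopologicalSpace K] [CompactSpace K]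

noncomputable def supValue (φ : C(K, ℝ)) : ℝ := ⨆ x, φ x

theorem apply_le_supValue (φ : C(K, ℝ)) (x : K) : φ x ≤ supValue φ :=
  le_ciSup (isCompact_range φ.continuous).bddAbove x

theorem supValue_eq_of_forall_le {φ : C(K, ℝ)} {x : K} (hx : ∀ y, φ y ≤ φ x) :
    supValue φ = φ x :=
  have : Nonempty K := ⟨x⟩
  le_antisymm (ciSup_le hx) (apply_le_supValue φ x)

theorem lipschitzWith_one_supValue [Nonempty K] : LipschitzWith 1 (supValue (K := K)) :=
  LipschitzWith.of_le_add fun φ ψ => ciSup_le fun x => by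
    have : dist (φ x) (ψ x) ≤ dist φ ψ := ContinuousMap.dist_apply_le_dist x
    rw [Real.dist_eq, abs_le] at this
    have := apply_le_supValue ψ x
    linarith

/-- If `x` and `y` both maximise `φ`, then `secondDiff supValue φ ψ s ≥ s * |ψ x - ψ y|`. -/
theorem apply_eq_of_smoothAlong_supValue {φ ψ : C(K, ℝ)} (h : SmoothAlong supValue φ ψ)
    {x y : K} (hx : ∀ z, φ z ≤ φ x) (hy : φ y = φ x) : ψ x = ψ y := by
  by_contra hne
  obtain ⟨s, hs, hlt⟩ := h |ψ x - ψ y| (abs_pos.2 (sub_ne_zero.2 hne))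
  have hxp := apply_le_supValue (φ + s • ψ) x
  have hyp := apply_le_supValue (φ + s • ψ) y
  have hxm := apply_le_supValue (φ - s • ψ) x
  have hym := apply_le_supValue (φ - s • ψ) y
  simp only [ContinuousMap.add_apply, ContinuousMap.sub_apply, ContinuousMap.smul_apply,
    smul_eq_mul] at hxp hyp hxm hym
  unfold secondDiff at hlt
  rw [supValue_eq_of_forall_le hx] at hlt
  rcases abs_cases (ψ x - ψ y) with ⟨habs, -⟩ | ⟨habs, -⟩ <;> rw [habs] at hlt <;> nlinarith

end SupValue

section BiSup

variable {K : Type*} [TopologicalSpace K]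

theorem biSup_abs_nonneg (S : Set K) (φ : C(K, ℝ)) : 0 ≤ ⨆ x ∈ S, |φ x| :=
  Real.iSup_nonneg fun _ => Real.iSup_nonneg fun _ => abs_nonneg _

theorem biSup_abs_le_norm [CompactSpace K] (S : Set K) (φ : C(K, ℝ)) : ⨆ x ∈ S, |φ x| ≤ ‖φ‖ :=
  Real.iSup_le (fun x => Real.iSup_le (fun _ => φ.norm_coe_le_norm x) (norm_nonneg φ))
    (norm_nonneg φ)

theorem abs_le_biSup_abs [CompactSpace K] {S : Set K} (φ : C(K, ℝ)) {k : K} (hk : k ∈ S) :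
    |φ k| ≤ ⨆ x ∈ S, |φ x| := by
  refine le_ciSup₂ (f := fun x (_ : x ∈ S) => |φ x|) ⟨‖φ‖, ?_⟩ k hk
  simp only [upperBounds, Set.mem_iUnion, Set.mem_range]
  rintro _ ⟨x, _, rfl⟩
  exact φ.norm_coe_le_norm x

theorem biSup_abs_mono [CompactSpace K] {S T : Set K} (hST : S ⊆ T) (φ : C(K, ℝ)) :
    ⨆ x ∈ S, |φ x| ≤ ⨆ x ∈ T, |φ x| :=
  Real.iSup_le (fun _ => Real.iSup_le (fun hx => abs_le_biSup_abs φ (hST hx))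
    (biSup_abs_nonneg T φ)) (biSup_abs_nonneg T φ)

end BiSup

section ExposedPoints

variable {K : Type*} [MetricSpace K] [CompactSpace K] {Φ : Submodule ℝ C(K, ℝ)}

def exposedPoints (Φ : Submodule ℝ C(K, ℝ)) : Set K :=
  {x | ∃ φ ∈ Φ, ∀ y, y ≠ x → φ y < φ x}

theorem exists_mem_exposedPoints_apply_le_add [Nonempty K] (hclosed : IsClosed (Φ : Set C(K, ℝ)))
    (hsep : ∀ x y : K, x ≠ y → ∃ φ ∈ Φ, φ x ≠ φ y) {φ : C(K, ℝ)} (hφ : φ ∈ Φ) {ε : ℝ}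
    (hε : 0 < ε) : ∃ k ∈ exposedPoints Φ, ∀ x, φ x ≤ φ k + ε := by
  have : CompleteSpace Φ := hclosed.completeSpace_coe
  have hdense := (lipschitzWith_one_supValue.comp
    (LipschitzWith.subtype_val (Φ : Set C(K, ℝ)))).dense_setOf_forall_smoothAlong
  obtain ⟨⟨ψ, hψ⟩, hψφ, hsmooth⟩ := Metric.dense_iff.1 hdense ⟨φ, hφ⟩ (ε / 2) (by positivity)
  obtain ⟨k, -, hk⟩ := isCompact_univ.exists_isMaxOn Set.univ_nonempty ψ.continuous.continuousOn
  have hmax : ∀ y, ψ y ≤ ψ k := fun y => hk (Set.mem_univ y)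
  refine ⟨k, ⟨ψ, hψ, fun y hyk => (hmax y).lt_of_ne fun hψy => ?_⟩, fun x => ?_⟩
  · obtain ⟨χ, hχ, hχyk⟩ := hsep y k hyk
    exact hχyk (apply_eq_of_smoothAlong_supValue ((hsmooth ⟨χ, hχ⟩).of_comp Φ.subtype)
      hmax hψy).symm
  · have hdist : dist ψ φ < ε / 2 := hψφ
    have hx : dist (ψ x) (φ x) ≤ dist ψ φ := ContinuousMap.dist_apply_le_dist x
    have hk : dist (ψ k) (φ k) ≤ dist ψ φ := ContinuousMap.dist_apply_le_dist k
    rw [Real.dist_eq, abs_le] at hx hk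
    linarith [hmax x]

theorem norm_eq_biSup_exposedPoints (hclosed : IsClosed (Φ : Set C(K, ℝ)))
    (hsep : ∀ x y : K, x ≠ y → ∃ φ ∈ Φ, φ x ≠ φ y) {φ : C(K, ℝ)} (hφ : φ ∈ Φ) :
    ‖φ‖ = ⨆ x ∈ exposedPoints Φ, |φ x| := by
  refine le_antisymm ((φ.norm_le (biSup_abs_nonneg _ φ)).2 fun x => ?_) (biSup_abs_le_norm _ φ)
  have : Nonempty K := ⟨x⟩
  refine le_of_forall_pos_le_add fun ε hε => ?_
  obtain ⟨k, hk, hφk⟩ := exists_mem_exposedPoints_apply_le_add hclosed hsep hφ hε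
  obtain ⟨l, hl, hφl⟩ := exists_mem_exposedPoints_apply_le_add hclosed hsep (Φ.neg_mem hφ) hε
  have hk' := abs_le_biSup_abs φ hk
  have hl' := abs_le_biSup_abs φ hl
  have := hφk x
  have := hφl x
  simp only [ContinuousMap.neg_apply] at this
  rw [Real.norm_eq_abs, abs_le']
  constructor <;> linarith [le_abs_self (φ k), neg_abs_le (φ l)]

theorem biSup_abs_lt_norm_of_forall_lt {C : Set K} (hC : IsClosed C) {ψ : C(K, ℝ)}
    (hpos : ∀ y, 0 < ψ y) {x : K} (hx : ∀ y, y ≠ x → ψ y < ψ x) (hxC : x ∉ C) :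
    ⨆ y ∈ C, |ψ y| < ‖ψ‖ := by
  have hψx : ψ x ≤ ‖ψ‖ := (le_abs_self _).trans (ψ.norm_coe_le_norm x)
  rcases C.eq_empty_or_nonempty with rfl | hCne
  · simpa using (hpos x).trans_le hψx
  obtain ⟨z, hzC, hz⟩ := hC.isCompact.exists_isMaxOn hCne ψ.continuous.continuousOn
  have hsup : ⨆ y ∈ C, |ψ y| ≤ ψ z :=
    Real.iSup_le (fun y => Real.iSup_le (fun hy => (abs_of_pos (hpos y)).trans_le (hz hy))
      (hpos z).le) (hpos z).le
  exact hsup.trans_lt ((hx z fun h => hxC (h ▸ hzC)).trans_le hψx)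

theorem exposedPoints_subset_of_norming (hconst : ∀ c : ℝ, ContinuousMap.const K c ∈ Φ) {C : Set K}
    (hC : IsClosed C) (hnorming : ∀ φ ∈ Φ, ‖φ‖ = ⨆ x ∈ C, |φ x|) : exposedPoints Φ ⊆ C := by
  rintro x ⟨φ, hφ, hx⟩
  by_contra hxC
  set ψ := φ + ContinuousMap.const K (‖φ‖ + 1)
  have hpos : ∀ y, 0 < ψ y := fun y => by
    have := neg_abs_le (φ y) |>.trans' (neg_le_neg (φ.norm_coe_le_norm y))
    simp only [ψ, ContinuousMap.add_apply, ContinuousMap.const_apply]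
    linarith
  have hψx : ∀ y, y ≠ x → ψ y < ψ x := fun y hy => by
    simpa [ψ] using hx y hy
  exact (biSup_abs_lt_norm_of_forall_lt hC hpos hψx hxC).ne
    (hnorming ψ (Φ.add_mem hφ (hconst _))).symm

end ExposedPoints

/-- **The Shilov boundary and `Φ`-exposed points.** Let `K` be a compact metric space and `Φ`
a closed subspace of `(C(K,ℝ), ‖·‖_∞)` separating the points of `K` and containing the
constants. Then (a) the set of `Φ`-exposed points of `K` is norming for `Φ`; (b) it is
contained in every closed boundary for `Φ`; consequently its closure is a closed boundary
contained in every closed boundary for `Φ`, i.e. it is the smallest closed boundary (the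
Shilov boundary) of `Φ`. -/
theorem stmt_17 {K : Type*} [MetricSpace K] [CompactSpace K]
    (Φ : Submodule ℝ C(K, ℝ)) (hclosed : IsClosed (Φ : Set C(K, ℝ)))
    (hsep : ∀ x y : K, x ≠ y → ∃ φ ∈ Φ, φ x ≠ φ y)
    (hconst : ∀ c : ℝ, ContinuousMap.const K c ∈ Φ)
    (PhiExp : Set K)
    (hPhiExp : PhiExp = {x : K | ∃ φ ∈ Φ, ∀ y : K, y ≠ x → φ y < φ x}) :
    (∀ φ ∈ Φ, ‖φ‖ = ⨆ x ∈ PhiExp, |φ x|) ∧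
      (∀ C : Set K, IsClosed C → (∀ φ ∈ Φ, ‖φ‖ = ⨆ x ∈ C, |φ x|) → PhiExp ⊆ C) ∧
      (∀ φ ∈ Φ, ‖φ‖ = ⨆ x ∈ closure PhiExp, |φ x|) ∧
      (∀ C : Set K, IsClosed C → (∀ φ ∈ Φ, ‖φ‖ = ⨆ x ∈ C, |φ x|) →
        closure PhiExp ⊆ C) := by
  obtain rfl : PhiExp = exposedPoints Φ := hPhiExp
  have hnorming : ∀ φ ∈ Φ, ‖φ‖ = ⨆ x ∈ exposedPoints Φ, |φ x| :=
    fun φ hφ => norm_eq_biSup_exposedPoints hclosed hsep hφ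
  have hminimal : ∀ C : Set K, IsClosed C → (∀ φ ∈ Φ, ‖φ‖ = ⨆ x ∈ C, |φ x|) →
      exposedPoints Φ ⊆ C :=
    fun C hC hC' => exposedPoints_subset_of_norming hconst hC hC'
  refine ⟨hnorming, hminimal, fun φ hφ => ?_, fun C hC hC' => closure_minimal (hminimal C hC hC') hC⟩
  exact le_antisymm ((hnorming φ hφ).trans_le (biSup_abs_mono subset_closure φ))
    (biSup_abs_le_norm _ φ)
end

section
/- Let E be a real Banach space and let K be a convex weak* compact subset of E* whose interior with respect to the norm topology of E* is nonempty. Then the weak* exposed points of K coincide with the affine exposed points of K: w*Exp(K) = AExp(K). -/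
/-!
Since `K` contains a norm ball around some `p₀`, an affine weak*-continuous `τ` exposing `p`
satisfies `τ q = τ p₀ + f (q - p₀)` on `K` for a linear functional `f` on `E*`, obtained by
extending `τ (p₀ + ·) - τ p₀` from the ball by homogeneity; `f` is bounded because `τ` is bounded
on the compact set `K`. Continuity of `τ` at `p₀` makes `f` weak*-continuous at `0` on the unit
ball, so `f` lies within every `ε` of the canonical image of `E` in `E**`. That image is closed
because `E` is complete, hence `f` is evaluation at some `x : E`, and this `x` exposes `p`.
-/

open Set Filter Topology Metric NormedSpace WeakDual

theorem exists_mem_span_norm_sub_le {W ι : Type*} [NormedAddCommGroup W] [NormedSpace ℝ W]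
    [Finite ι] (L : ι → StrongDual ℝ W) (φ : StrongDual ℝ W) {ε : ℝ} (hε : 0 ≤ ε)
    (hφ : ∀ y, ‖y‖ = 1 → (∀ i, L i y = 0) → ‖φ y‖ ≤ ε) :
    ∃ ψ ∈ Submodule.span ℝ (range L), ‖φ - ψ‖ ≤ ε := by
  set N : Submodule ℝ W := ⨅ i, LinearMap.ker (L i : W →ₗ[ℝ] ℝ)
  obtain ⟨g, hg, hgφ⟩ := exists_extension_norm_eq N (φ.comp N.subtypeL)
  have hker : N ≤ LinearMap.ker ((φ - g : StrongDual ℝ W) : W →ₗ[ℝ] ℝ) := fun y hy => by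
    simpa [sub_eq_zero] using (hg ⟨y, hy⟩).symm
  have hspan := mem_span_of_iInf_ker_le_ker hker
  rw [show (fun i => (L i : W →ₗ[ℝ] ℝ)) = ContinuousLinearMap.coeLM ℝ ∘ L from rfl, range_comp,
    Submodule.span_image] at hspan
  obtain ⟨ψ, hψ, hψφ⟩ := hspan
  rw [ContinuousLinearMap.coeLM_apply, ContinuousLinearMap.coe_inj] at hψφ
  refine ⟨ψ, hψ, ?_⟩
  rw [hψφ, sub_sub_cancel, hgφ]
  exact ContinuousLinearMap.opNorm_le_of_unit_norm hε fun y hy =>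
    hφ y hy fun i => (Submodule.mem_iInf _).1 y.2 i

theorem WeakDual.exists_finset_forall_eq_zero_mem {𝕜 E : Type*} [CommSemiring 𝕜]
    [TopologicalSpace 𝕜] [ContinuousAdd 𝕜] [ContinuousConstSMul 𝕜 𝕜] [AddCommMonoid E]
    [Module 𝕜 E] [TopologicalSpace E] {U : Set (WeakDual 𝕜 E)} (hU : U ∈ 𝓝 0) :
    ∃ s : Finset E, ∀ y : WeakDual 𝕜 E, (∀ x ∈ s, y x = 0) → y ∈ U := by
  obtain ⟨t, ht, htU⟩ := mem_comap.1 <|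
    (nhds_induced (fun (y : WeakDual 𝕜 E) (x : E) => y x) 0).ge hU
  rw [nhds_pi] at ht
  obtain ⟨s, u, hu, hsu⟩ := Filter.mem_pi'.1 ht
  refine ⟨s, fun y hy => htU (hsu fun x hx => ?_)⟩
  convert mem_of_mem_nhds (hu x) using 1
  exact hy x hx

/-- A weak form of the Banach–Dieudonné theorem. -/
theorem exists_eq_apply_of_continuousWithinAt {E : Type*} [NormedAddCommGroup E]
    [NormedSpace ℝ E] [CompleteSpace E] (φ : StrongDual ℝ (StrongDual ℝ E))
    (hφ : ContinuousWithinAt (fun y : WeakDual ℝ E => φ (toStrongDual y))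
      {y | ‖toStrongDual y‖ ≤ 1} 0) :
    ∃ x : E, ∀ y, φ y = y x := by
  have happrox : ∀ ε > 0, ∃ x : E, dist φ (inclusionInDoubleDual ℝ E x) ≤ ε := by
    intro ε hε
    obtain ⟨U, hU, hUφ⟩ :=
      mem_nhdsWithin_iff_exists_mem_nhds_inter.1 (hφ (closedBall_mem_nhds _ hε))
    obtain ⟨s, hs⟩ := WeakDual.exists_finset_forall_eq_zero_mem hU
    obtain ⟨ψ, hψ, hφψ⟩ := exists_mem_span_norm_sub_le
      (fun x : s => inclusionInDoubleDual ℝ E x) φ hε.le fun y hy hys => by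
        simpa using hUφ ⟨hs y.toWeakDual fun x hx => hys ⟨x, hx⟩, hy.le⟩
    have hspan : Submodule.span ℝ (Set.range fun x : s => inclusionInDoubleDual ℝ E x) ≤
        LinearMap.range (inclusionInDoubleDual ℝ E : E →ₗ[ℝ] StrongDual ℝ (StrongDual ℝ E)) :=
      Submodule.span_le.2 (range_subset_iff.2 fun x => ⟨x, rfl⟩)
    obtain ⟨x, rfl⟩ := hspan hψ
    exact ⟨x, (dist_eq_norm _ _).trans_le hφψ⟩
  have hclosed : IsClosed (range (inclusionInDoubleDual ℝ E)) :=
    (inclusionInDoubleDualLi (E := E) ℝ).isometry.isUniformInducing.isComplete_range.isClosed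
  have hφ_mem : φ ∈ closure (range (inclusionInDoubleDual ℝ E)) :=
    (Metric.mem_closure_iff (α := StrongDual ℝ (StrongDual ℝ E))).2 fun ε hε => by
      obtain ⟨x, hx⟩ := happrox (ε / 2) (half_pos hε)
      exact ⟨_, ⟨x, rfl⟩, hx.trans_lt (half_lt_self hε)⟩
  obtain ⟨x, hx⟩ := hclosed.closure_subset hφ_mem
  exact ⟨x, fun y => by rw [← hx]; rfl⟩

theorem eventually_norm_smul_le {V : Type*} [SeminormedAddCommGroup V] [NormedSpace ℝ V]
    (y : V) {r : ℝ} (hr : 0 < r) : ∀ᶠ c in 𝓝[>] (0 : ℝ), 0 < c ∧ ‖c • y‖ ≤ r := by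
  refine eventually_mem_nhdsWithin.and (nhdsWithin_le_nhds ?_)
  have hcont : Continuous fun c : ℝ => ‖c • y‖ := (continuous_id.smul continuous_const).norm
  exact (hcont.tendsto' 0 0 (by simp)).eventually (eventually_le_nhds hr)

theorem exists_linearMap_eqOn_closedBall {V : Type*} [NormedAddCommGroup V] [NormedSpace ℝ V]
    {r : ℝ} (hr : 0 < r) {g : V → ℝ}
    (hg : ∀ y ∈ closedBall (0 : V) r, ∀ z ∈ closedBall (0 : V) r, ∀ t ∈ Icc (0 : ℝ) 1,
      g (t • y + (1 - t) • z) = t * g y + (1 - t) * g z)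
    (hg0 : g 0 = 0) :
    ∃ f : V →ₗ[ℝ] ℝ, EqOn f g (closedBall 0 r) := by
  have hsmul : ∀ y ∈ closedBall (0 : V) r, ∀ t ∈ Icc (0 : ℝ) 1, g (t • y) = t * g y := by
    intro y hy t ht
    simpa [hg0] using hg y hy 0 (mem_closedBall_self hr.le) t ht
  set F : V → ℝ := fun y => ‖y‖ / r * g ((r / ‖y‖) • y)
  have hF : ∀ y (c : ℝ), 0 < c → ‖c • y‖ ≤ r → F y = g (c • y) / c := by
    intro y c hc hcy
    rcases eq_or_ne y 0 with rfl | hy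
    · simp [F, hg0]
    have hy' : 0 < ‖y‖ := norm_pos_iff.2 hy
    rw [norm_smul, Real.norm_of_nonneg hc.le] at hcy
    have hu : (r / ‖y‖) • y ∈ closedBall (0 : V) r := by
      rw [mem_closedBall_zero_iff, norm_smul, Real.norm_of_nonneg (by positivity),
        div_mul_cancel₀ _ hy'.ne']
    have hcu : c • y = (c * ‖y‖ / r) • ((r / ‖y‖) • y) := by
      rw [smul_smul]; congr 1; field_simp
    rw [hcu, hsmul _ hu _ ⟨by positivity, (div_le_one hr).2 hcy⟩]
    show ‖y‖ / r * _ = _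
    field_simp
  have hF_eq : EqOn F g (closedBall 0 r) := fun y hy => by
    simpa using hF y 1 one_pos (by simpa using hy)
  have hadd : ∀ y z, F (y + z) = F y + F z := by
    intro y z
    obtain ⟨c, ⟨hc, hcy⟩, ⟨-, hcz⟩, -, hcyz⟩ :=
      ((eventually_norm_smul_le ((2 : ℝ) • y) hr).and
        ((eventually_norm_smul_le ((2 : ℝ) • z) hr).and
          (eventually_norm_smul_le (y + z) hr))).exists
    have hFy : F y = g (c • (2 : ℝ) • y) / (c * 2) := by
      rw [smul_smul]; exact hF y _ (by positivity) (by rwa [← smul_smul])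
    have hFz : F z = g (c • (2 : ℝ) • z) / (c * 2) := by
      rw [smul_smul]; exact hF z _ (by positivity) (by rwa [← smul_smul])
    have hmid : c • (y + z) =
        (1 / 2 : ℝ) • (c • (2 : ℝ) • y) + (1 - 1 / 2 : ℝ) • (c • (2 : ℝ) • z) := by
      module
    rw [hF _ c hc hcyz, hFy, hFz, hmid, hg _ (mem_closedBall_zero_iff.2 hcy) _
      (mem_closedBall_zero_iff.2 hcz) _ ⟨by norm_num, by norm_num⟩]
    field_simp
    ring
  have hF0 : F 0 = 0 := by simp [F]
  have hsmul_pos : ∀ t : ℝ, 0 < t → ∀ y, F (t • y) = t * F y := by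
    intro t ht y
    obtain ⟨c, hc, hct⟩ := (eventually_norm_smul_le (t • y) hr).exists
    rw [hF _ c hc hct, hF y (c * t) (by positivity) (by rwa [← smul_smul]), smul_smul]
    field_simp
  have hneg : ∀ y, F (-y) = -F y := fun y => by
    linarith [hadd y (-y), add_neg_cancel y ▸ hF0]
  have hsmul' : ∀ (t : ℝ) y, F (t • y) = t * F y := by
    intro t y
    rcases lt_trichotomy t 0 with ht | rfl | ht
    · rw [show t • y = (-t) • -y by module, hsmul_pos _ (neg_pos.2 ht), hneg]
      ring
    · simp [hF0]
    · exact hsmul_pos t ht y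
  exact ⟨{ toFun := F, map_add' := hadd, map_smul' := hsmul' }, hF_eq⟩

theorem exists_continuousLinearMap_eq_add_sub {V : Type*} [NormedAddCommGroup V]
    [NormedSpace ℝ V] {K : Set V} {τ : V → ℝ} {p₀ : V} {r M : ℝ} (hr : 0 < r)
    (hball : closedBall p₀ r ⊆ K)
    (hτ : ∀ a ∈ K, ∀ b ∈ K, ∀ t ∈ Icc (0 : ℝ) 1,
      τ (t • a + (1 - t) • b) = t * τ a + (1 - t) * τ b)
    (hM : ∀ q ∈ K, ‖τ q‖ ≤ M) :
    ∃ f : StrongDual ℝ V, ∀ q ∈ K, τ q = τ p₀ + f (q - p₀) := by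
  have hmem : ∀ y ∈ closedBall (0 : V) r, p₀ + y ∈ K := fun y hy =>
    hball (by simpa [dist_eq_norm] using hy)
  have hp₀ : p₀ ∈ K := by simpa using hmem 0 (mem_closedBall_self hr.le)
  obtain ⟨f, hf⟩ := exists_linearMap_eqOn_closedBall hr (g := fun y => τ (p₀ + y) - τ p₀)
    (fun y hy z hz t ht => by
      rw [show p₀ + (t • y + (1 - t) • z) = t • (p₀ + y) + (1 - t) • (p₀ + z) by module,
        hτ _ (hmem y hy) _ (hmem z hz) t ht]
      ring)
    (by simp)
  have hbound : ∀ z ∈ closedBall (0 : V) r, ‖f z‖ ≤ 2 * M := fun z hz => by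
    rw [hf hz, two_mul]
    exact (norm_sub_le _ _).trans (add_le_add (hM _ (hmem z hz)) (hM _ hp₀))
  refine ⟨f.mkContinuous (2 * M / r) (LinearMap.bound_of_ball_bound' hr _ f hbound),
    fun q hq => ?_⟩
  obtain ⟨t, ⟨ht0, htr⟩, -, ht1⟩ :=
    ((eventually_norm_smul_le (q - p₀) hr).and (Ioc_mem_nhdsGT one_pos)).exists
  have hft : f (t • (q - p₀)) = τ (p₀ + t • (q - p₀)) - τ p₀ :=
    hf (mem_closedBall_zero_iff.2 htr)
  rw [map_smul, show p₀ + t • (q - p₀) = t • q + (1 - t) • p₀ by module,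
    hτ q hq p₀ hp₀ t ⟨ht0.le, ht1⟩, smul_eq_mul] at hft
  have : t * (τ q - τ p₀ - f (q - p₀)) = 0 := by linarith
  simp only [LinearMap.mkContinuous_apply]
  linarith [(mul_eq_zero.1 this).resolve_left ht0.ne']

theorem continuousWithinAt_of_eq_add_sub {E : Type*} [NormedAddCommGroup E] [NormedSpace ℝ E]
    {K : Set (WeakDual ℝ E)} {τ : WeakDual ℝ E → ℝ} (hτ : ContinuousOn τ K)
    {p₀ : StrongDual ℝ E} {r : ℝ} (hr : 0 < r)
    (hball : closedBall p₀ r ⊆ StrongDual.toWeakDual ⁻¹' K) {f : StrongDual ℝ (StrongDual ℝ E)}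
    (hf : ∀ q ∈ StrongDual.toWeakDual ⁻¹' K,
      τ (StrongDual.toWeakDual q) = τ (StrongDual.toWeakDual p₀) + f (q - p₀)) :
    ContinuousWithinAt (fun y : WeakDual ℝ E => f (toStrongDual y))
      {y | ‖toStrongDual y‖ ≤ 1} 0 := by
  set B := {y : WeakDual ℝ E | ‖toStrongDual y‖ ≤ 1}
  set ψ : WeakDual ℝ E → WeakDual ℝ E := fun y => StrongDual.toWeakDual p₀ + r • y
  have hψB : ∀ y ∈ B, toStrongDual (ψ y) ∈ closedBall p₀ r := fun y hy => by
    simp only [ψ, map_add, map_smul, mem_closedBall, dist_eq_norm]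
    simpa [norm_smul, abs_of_pos hr] using mul_le_mul_of_nonneg_left hy hr.le
  have hp₀ : StrongDual.toWeakDual p₀ ∈ K := hball (mem_closedBall_self hr.le)
  have hcont : ContinuousWithinAt (fun y => (τ (ψ y) - τ (StrongDual.toWeakDual p₀)) / r) B 0 :=
    ((hτ.continuousWithinAt hp₀).comp_of_eq
      (continuous_const.add (continuous_const_smul r)).continuousWithinAt
      (fun y hy => by simpa using hball (hψB y hy)) (by simp)).sub
      continuousWithinAt_const |>.div_const r
  refine hcont.congr_of_mem (fun y hy => ?_) (by simp [B])
  have := hf _ (hball (hψB y hy))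
  simp only [ψ, map_add, map_smul, toWeakDual_toStrongDual, StrongDual.toStrongDual_toWeakDual,
    add_sub_cancel_left, smul_eq_mul] at this ⊢
  rw [this]
  field_simp
  ring

theorem exists_forall_eq_add_apply {E : Type*} [NormedAddCommGroup E] [NormedSpace ℝ E]
    [CompleteSpace E] {K : Set (WeakDual ℝ E)} (hcomp : IsCompact K)
    (hint : (interior (StrongDual.toWeakDual ⁻¹' K)).Nonempty) {τ : WeakDual ℝ E → ℝ}
    (hτ_cont : ContinuousOn τ K)
    (hτ_aff : ∀ a ∈ K, ∀ b ∈ K, ∀ t ∈ Icc (0 : ℝ) 1,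
      τ (t • a + (1 - t) • b) = t * τ a + (1 - t) * τ b) :
    ∃ (x : E) (c : ℝ), ∀ q ∈ K, τ q = c + q x := by
  obtain ⟨M, hM⟩ := hcomp.exists_bound_of_continuousOn hτ_cont
  obtain ⟨p₀, hp₀⟩ := hint
  obtain ⟨r, hr, hball⟩ := nhds_basis_closedBall.mem_iff.1 (mem_interior_iff_mem_nhds.1 hp₀)
  obtain ⟨f, hf⟩ := exists_continuousLinearMap_eq_add_sub
    (τ := fun q => τ (StrongDual.toWeakDual q)) hr hball
    (fun a ha b hb t ht => by
      simpa using hτ_aff (StrongDual.toWeakDual a) ha (StrongDual.toWeakDual b) hb t ht)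
    fun q hq => hM _ hq
  obtain ⟨x, hx⟩ := exists_eq_apply_of_continuousWithinAt f
    (continuousWithinAt_of_eq_add_sub hτ_cont hr hball hf)
  refine ⟨x, τ (StrongDual.toWeakDual p₀) - p₀ x, fun q hq => ?_⟩
  have := hf q.toStrongDual hq
  rw [toWeakDual_toStrongDual, map_sub, hx, hx, toStrongDual_apply] at this
  rw [this]
  ring

/-- Let `E` be a real Banach space and `K` a convex weak* compact subset of `E*` with
nonempty interior for the norm topology of `E*`. Then the weak* exposed points of `K`
coincide with its affine exposed points (for weak*-continuous affine maps `τ : K → ℝ`). -/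
theorem stmt_18 {E : Type*} [NormedAddCommGroup E] [NormedSpace ℝ E] [CompleteSpace E]
    (K : Set (WeakDual ℝ E)) (hconv : Convex ℝ K) (hcomp : IsCompact K)
    (hint : (interior (show Set (E →L[ℝ] ℝ) from K)).Nonempty) :
    {p ∈ K | ∃ x : E, ∀ q ∈ K, q ≠ p → q x < p x} =
      {p : WeakDual ℝ E | ∃ hp : p ∈ K, ∃ τ : K → ℝ, Continuous τ ∧
        (∀ (a b : WeakDual ℝ E) (ha : a ∈ K) (hb : b ∈ K) (l : ℝ), 0 ≤ l → l ≤ 1 →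
          ∀ hm : l • a + (1 - l) • b ∈ K,
            τ ⟨l • a + (1 - l) • b, hm⟩ = l * τ ⟨a, ha⟩ + (1 - l) * τ ⟨b, hb⟩) ∧
        (∀ q : WeakDual ℝ E, ∀ hq : q ∈ K, q ≠ p → τ ⟨q, hq⟩ < τ ⟨p, hp⟩)} := by
  ext p
  refine ⟨fun ⟨hp, x, hx⟩ => ⟨hp, fun q => q.1 x, (eval_continuous x).comp continuous_subtype_val,
    fun _ _ _ _ _ _ _ _ => rfl, hx⟩, ?_⟩
  rintro ⟨hp, τ, hτ_cont, hτ_aff, hτ_exp⟩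
  classical
  set τ' : WeakDual ℝ E → ℝ := fun q => if hq : q ∈ K then τ ⟨q, hq⟩ else 0
  have hτ' : ∀ q (hq : q ∈ K), τ' q = τ ⟨q, hq⟩ := fun q hq => dif_pos hq
  have hτ'_cont : ContinuousOn τ' K :=
    continuousOn_iff_continuous_domRestrict.2 <| by
      rwa [show K.domRestrict τ' = τ from funext fun q => hτ' q q.2]
  obtain ⟨x, c, hx⟩ := exists_forall_eq_add_apply hcomp hint hτ'_cont
    fun a ha b hb t ⟨ht0, ht1⟩ => by
      have hm := hconv ha hb ht0 (sub_nonneg.2 ht1) (add_sub_cancel _ _)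
      rw [hτ' _ hm, hτ' a ha, hτ' b hb]
      exact hτ_aff a b ha hb t ht0 ht1 hm
  refine ⟨hp, x, fun q hq hne => ?_⟩
  have := hτ_exp q hq hne
  rw [← hτ' q hq, ← hτ' p hp, hx q hq, hx p hp] at this
  linarith
end

section
/- Let V be a real normed vector space and let K be a nonempty convex compact subset of V whose affine hull is finite-dimensional. Then the exposed points of K coincide with the affine exposed points of K: Exp(K) = AExp(K). -/
set_option maxHeartbeats 2000000 in
/-- In a real normed vector space, the exposed points and the affine exposed points of a
nonempty convex compact set whose affine hull is finite-dimensional coincide. -/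
theorem stmt_19 {V : Type*} [NormedAddCommGroup V] [NormedSpace ℝ V]
    (K : Set V) (hne : K.Nonempty) (hconv : Convex ℝ K) (hcomp : IsCompact K)
    (hfd : FiniteDimensional ℝ (affineSpan ℝ K).direction) :
    {x ∈ K | ∃ g : V →L[ℝ] ℝ, ∀ y ∈ K, y ≠ x → g y < g x} =
      {x : V | ∃ hx : x ∈ K, ∃ τ : K → ℝ, Continuous τ ∧
        (∀ (a b : V) (ha : a ∈ K) (hb : b ∈ K) (l : ℝ), 0 ≤ l → l ≤ 1 →
          ∀ hm : l • a + (1 - l) • b ∈ K,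
            τ ⟨l • a + (1 - l) • b, hm⟩ = l * τ ⟨a, ha⟩ + (1 - l) * τ ⟨b, hb⟩) ∧
        (∀ y : V, ∀ hy : y ∈ K, y ≠ x → τ ⟨y, hy⟩ < τ ⟨x, hx⟩)} := by
  classical
  ext x
  simp only [Set.mem_setOf_eq, Set.mem_sep_iff]
  constructor
  · rintro ⟨hx, g, hg⟩
    refine ⟨hx, fun p => g p, g.continuous.comp continuous_subtype_val, ?_, ?_⟩
    · intro a b ha hb l hl0 hl1 hm
      simp [map_add, map_smul, smul_eq_mul]
    · intro y hy hyx
      exact hg y hy hyx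
  · rintro ⟨hx, τ, hτc, hτaff, hτmax⟩
    set E : Submodule ℝ V := (affineSpan ℝ K).direction with hE
    haveI : FiniteDimensional ℝ E := hfd
    obtain ⟨p, hp⟩ := hne
    -- the translated copy of K inside E
    set Kc : Set E := {v : E | (v : V) + p ∈ K} with hKc
    have hKc_conv : Convex ℝ Kc := by
      have : Kc = (AffineMap.comp (AffineMap.const ℝ V p +ᵥ
          (LinearMap.id : V →ₗ[ℝ] V).toAffineMap) E.subtype.toAffineMap) ⁻¹' K := by
        ext v
        simp [hKc, AffineMap.comp, add_comm]
      rw [this]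
      exact hconv.affine_preimage _
    have hKc0 : (0 : E) ∈ Kc := by simpa [hKc] using hp
    -- membership transfer: y - p for y ∈ K
    have hmemE : ∀ y ∈ K, y - p ∈ E := by
      intro y hy
      rw [hE, ← vsub_eq_sub]
      exact AffineSubspace.vsub_mem_direction (subset_affineSpan ℝ K hy)
        (subset_affineSpan ℝ K hp)
    -- the affine span of Kc in E is everything
    have htop : affineSpan ℝ Kc = ⊤ := by
      rw [AffineSubspace.affineSpan_eq_top_iff_vectorSpan_eq_top_of_nonempty ℝ ↥E ↥E ⟨0, hKc0⟩]
      rw [vectorSpan_eq_span_vsub_set_right ℝ hKc0]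
      rw [Submodule.eq_top_iff']
      intro w
      have hw : (w : V) ∈ Submodule.span ℝ ((· -ᵥ p) '' K) := by
        rw [← vectorSpan_eq_span_vsub_set_right ℝ hp, ← direction_affineSpan]
        exact w.2
      have hsub : (· -ᵥ p) '' K ⊆ (E.subtype) '' ((· -ᵥ (0:E)) '' Kc) := by
        rintro _ ⟨y, hy, rfl⟩
        refine ⟨⟨y - p, hmemE y hy⟩ - 0, ⟨⟨y - p, hmemE y hy⟩, ?_, rfl⟩, ?_⟩
        · simp [hKc, hy]
        · simp [vsub_eq_sub]
      have : (w : V) ∈ Submodule.map E.subtype (Submodule.span ℝ ((· -ᵥ (0:E)) '' Kc)) := by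
        rw [← Submodule.span_image]
        exact Submodule.span_mono hsub hw
      obtain ⟨u, hu, huw⟩ := this
      have : u = w := Subtype.ext huw
      rwa [← this]
    -- get an interior point of Kc
    obtain ⟨z', hz'⟩ : (interior Kc).Nonempty :=
      hKc_conv.interior_nonempty_iff_affineSpan_eq_top.mpr htop
    set z : V := (z' : V) + p with hzdef
    have hzK : z ∈ K := by
      have : z' ∈ Kc := interior_subset hz'
      exact this
    -- local membership in all directions of E
    have hloc : ∀ v : E, ∃ δ : ℝ, 0 < δ ∧ ∀ t : ℝ, |t| ≤ δ → z + t • (v : V) ∈ K := by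
      intro v
      have hcont : Continuous fun t : ℝ => z' + t • v := by continuity
      have : (fun t : ℝ => z' + t • v) ⁻¹' interior Kc ∈ nhds (0 : ℝ) := by
        apply hcont.continuousAt.preimage_mem_nhds
        simpa using isOpen_interior.mem_nhds hz'
      obtain ⟨ε, hε, hball⟩ := Metric.mem_nhds_iff.mp this
      refine ⟨ε / 2, by positivity, fun t ht => ?_⟩
      have : z' + t • v ∈ interior Kc := by
        apply hball
        simp only [Metric.mem_ball, Real.dist_eq, sub_zero]
        calc |t| ≤ ε / 2 := ht
        _ < ε := by linarith
      have h2 : z' + t • v ∈ Kc := interior_subset this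
      have : ((z' + t • v : E) : V) + p ∈ K := h2
      simpa [hzdef, add_comm, add_assoc, add_left_comm] using this
    -- extended τ
    set τ' : V → ℝ := fun y => if h : y ∈ K then τ ⟨y, h⟩ else 0 with hτ'
    have haff' : ∀ a ∈ K, ∀ b ∈ K, ∀ l : ℝ, 0 ≤ l → l ≤ 1 →
        ∀ hm : l • a + (1 - l) • b ∈ K,
        τ' (l • a + (1 - l) • b) = l * τ' a + (1 - l) * τ' b := by
      intro a ha b hb l hl0 hl1 hm
      simp only [hτ', dif_pos ha, dif_pos hb, dif_pos hm]
      exact hτaff a b ha hb l hl0 hl1 hm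
    -- the slope function
    set sl : V → ℝ → ℝ := fun v t => (τ' (z + t • v) - τ' z) / t with hsl
    have harith1 : ∀ A C t t' : ℝ, 0 < t → 0 < t' →
        (t / t' * A + (1 - t / t') * C - C) / t = (A - C) / t' := by
      intro A C t t' ht ht'; field_simp; ring
    have harith2 : ∀ A B C s : ℝ, 0 < s →
        (1 / 2 * A + (1 - 1 / 2) * B - C) / s = (A - C) / (2 * s) + (B - C) / (2 * s) := by
      intro A B C s hs; field_simp; ring
    have harith3 : ∀ A C t : ℝ, (2 * C - A - C) / t = -((A - C) / t) := by
      intro A C t; ring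
    have harith4 : ∀ A C t c : ℝ, 0 < t → 0 < c → (A - C) / t = c * ((A - C) / (t * c)) := by
      intro A C t c ht hc; field_simp
    -- slope constancy
    have hconst : ∀ (v : V) (t t' : ℝ), 0 < t → 0 < t' → t ≤ t' →
        z + t' • v ∈ K → z + t • v ∈ K ∧ sl v t = sl v t' := by
      intro v t t' ht ht' htt hmem'
      have hl0 : (0:ℝ) ≤ t / t' := by positivity
      have hl1 : t / t' ≤ 1 := by
        rw [div_le_one ht']; exact htt
      have hkey : (t / t') • (z + t' • v) + (1 - t / t') • z = z + t • v := by
        have : (t / t') • (t' • v) = t • v := by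
          rw [smul_smul, div_mul_cancel₀ _ ht'.ne']
        rw [smul_add, this]; module
      have hmem : z + t • v ∈ K := by
        rw [← hkey]; exact hconv hmem' hzK hl0 (by linarith) (by ring)
      have heq := haff' _ hmem' _ hzK (t / t') hl0 hl1 (by rw [hkey]; exact hmem)
      rw [hkey] at heq
      refine ⟨hmem, ?_⟩
      simp only [hsl]
      rw [heq]
      exact harith1 _ _ _ _ ht ht'
    have hconst2 : ∀ (v : V) (t t' : ℝ), 0 < t → 0 < t' →
        z + t • v ∈ K → z + t' • v ∈ K → sl v t = sl v t' := by
      intro v t t' ht ht' hm hm'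
      rcases le_total t t' with h | h
      · exact (hconst v t t' ht ht' h hm').2
      · exact ((hconst v t' t ht' ht h hm).2).symm
    -- choose radii
    choose d hd0 hdK using hloc
    set f : E → ℝ := fun v => sl (v : V) (d v) with hf
    have hfdK : ∀ v : E, z + d v • (v : V) ∈ K := fun v =>
      hdK v (d v) (by rw [abs_of_pos (hd0 v)])
    have hfspec : ∀ v : E, ∀ t : ℝ, 0 < t → z + t • (v : V) ∈ K → f v = sl (v : V) t :=
      fun v t ht hm => hconst2 (v : V) (d v) t (hd0 v) ht (hfdK v) hm
    -- f is additive
    have hadd : ∀ v w : E, f (v + w) = f v + f w := by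
      intro v w
      set t : ℝ := min (d v) (d w) / 2 with htdef
      have ht : 0 < t := by
        have := hd0 v; have := hd0 w
        simp only [htdef]; positivity
      have h2tv : z + (2 * t) • (v : V) ∈ K := by
        apply hdK
        rw [abs_of_pos (by linarith)]
        simp only [htdef]
        calc 2 * (min (d v) (d w) / 2) = min (d v) (d w) := by ring
        _ ≤ d v := min_le_left _ _
      have h2tw : z + (2 * t) • (w : V) ∈ K := by
        apply hdK
        rw [abs_of_pos (by linarith)]
        simp only [htdef]
        calc 2 * (min (d v) (d w) / 2) = min (d v) (d w) := by ring
        _ ≤ d w := min_le_right _ _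
      have hkey : (1/2 : ℝ) • (z + (2*t) • (v:V)) + (1 - 1/2 : ℝ) • (z + (2*t) • (w:V))
          = z + t • ((v:V) + (w:V)) := by
        module
      have hmem : z + t • ((v:V) + (w:V)) ∈ K := by
        rw [← hkey]
        exact hconv h2tv h2tw (by norm_num) (by norm_num) (by norm_num)
      have heq := haff' _ h2tv _ h2tw (1/2) (by norm_num) (by norm_num)
        (by rw [hkey]; exact hmem)
      rw [hkey] at heq
      have hfvw : f (v + w) = sl ((v:V) + (w:V)) t := by
        have := hfspec (v + w) t ht (by exact_mod_cast hmem)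
        simpa using this
      rw [hfvw, hfspec v (2*t) (by linarith) h2tv, hfspec w (2*t) (by linarith) h2tw]
      simp only [hsl]
      rw [heq]
      exact harith2 _ _ _ _ ht
    -- f of zero
    have hzero : f 0 = 0 := by
      have : f 0 = sl ((0 : E) : V) 1 := hfspec 0 1 one_pos (by simpa using hzK)
      simp only [this, hsl]
      simp
    -- f of negation
    have hneg : ∀ v : E, f (-v) = -f v := by
      intro v
      set t : ℝ := d v with htdef
      have ht : 0 < t := hd0 v
      have hmv : z + t • (-(v:V)) ∈ K := by
        have : z + (-t) • (v : V) ∈ K := hdK v (-t) (by rw [abs_neg, abs_of_pos ht])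
        simpa [neg_smul, smul_neg] using this
      have hpv : z + t • (v:V) ∈ K := hfdK v
      have hkey : (1/2 : ℝ) • (z + t • (v:V)) + (1 - 1/2 : ℝ) • (z + t • (-(v:V))) = z := by
        module
      have heq := haff' _ hpv _ hmv (1/2) (by norm_num) (by norm_num)
        (by rw [hkey]; exact hzK)
      rw [hkey] at heq
      have h1 : f (-v) = sl (-(v:V)) t := by
        have := hfspec (-v) t ht (by exact_mod_cast hmv)
        simpa using this
      have h2 : f v = sl (v:V) t := hfspec v t ht hpv
      have hval : τ' (z + t • (-(v:V))) = 2 * τ' z - τ' (z + t • (v:V)) := by linarith [heq]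
      rw [h1, h2]
      simp only [hsl]
      rw [hval]
      exact harith3 _ _ _
    -- f of positive scalar multiples
    have hposmul : ∀ (c : ℝ), 0 < c → ∀ v : E, f (c • v) = c * f v := by
      intro c hc v
      set t : ℝ := d v / c with htdef
      have ht : 0 < t := div_pos (hd0 v) hc
      have htc : t * c = d v := by
        simp only [htdef]; field_simp
      have hmem : z + t • (c • (v:V)) ∈ K := by
        rw [smul_smul, mul_comm, ← mul_comm t c, htc]
        exact hfdK v
      have h1 : f (c • v) = sl (c • (v:V)) t := by
        have := hfspec (c • v) t ht (by exact_mod_cast hmem)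
        simpa using this
      have h2 : f v = sl (v:V) (t * c) := hfspec v (t * c) (mul_pos ht hc)
        (by rw [htc]; exact hfdK v)
      rw [h1, h2]
      simp only [hsl, smul_smul]
      exact harith4 _ _ _ _ ht hc
    have hsmul : ∀ (c : ℝ) (v : E), f (c • v) = c * f v := by
      intro c v
      rcases lt_trichotomy c 0 with hc | hc | hc
      · have : c • v = (-c) • (-v) := by module
        rw [this, hposmul (-c) (by linarith) (-v), hneg]
        ring
      · subst hc; simp [hzero]
      · exact hposmul c hc v
    -- build the continuous linear map on E
    set L : E →ₗ[ℝ] ℝ :=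
      { toFun := f
        map_add' := hadd
        map_smul' := fun c v => by simp [hsmul c v] } with hL
    obtain ⟨g, hg, -⟩ := exists_extension_norm_eq E (LinearMap.toContinuousLinearMap L)
    -- value of g on K
    have hval : ∀ y ∈ K, g y = τ' y - τ' z + g z := by
      intro y hy
      have hyz : y - z ∈ E := by
        rw [hE, ← vsub_eq_sub]
        exact AffineSubspace.vsub_mem_direction (subset_affineSpan ℝ K hy)
          (subset_affineSpan ℝ K hzK)
      have h1 : g y - g z = g (y - z) := by rw [map_sub]
      have h2 : g (y - z) = f ⟨y - z, hyz⟩ := by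
        have := hg ⟨y - z, hyz⟩
        simpa [hL] using this
      have h3 : f ⟨y - z, hyz⟩ = sl (y - z) 1 := by
        apply hfspec ⟨y - z, hyz⟩ 1 one_pos
        simpa using hy
      have h4 : sl (y - z) 1 = τ' y - τ' z := by
        simp [hsl]
      linarith [h1, h2 ▸ h1, h3, h4]
    refine ⟨hx, g, fun y hy hyx => ?_⟩
    have h1 := hval y hy
    have h2 := hval x hx
    have h3 : τ' y < τ' x := by
      simp only [hτ', dif_pos hy, dif_pos hx]
      exact hτmax y hy hyx
    linarith
end
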